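/- (One-sided intermediate bound in the proof of Lemma A.6, regression.) Let h ∈ H. Then |ε_{μ_S}(h, f_S) − ε_{μ_T}(h, f_T)| ≤ ∫ |f_S(z) − f_T(z)| dμ_S(z) + d_H̃(μ_S, μ_T), and likewise |ε_{μ_S}(h, f_S) − ε_{μ_T}(h, f_T)| ≤ ∫ |f_S(z) − f_T(z)| dμ_T(z) + d_H̃(μ_S, μ_T). -/

import Mathlib

open MeasureTheory Set

/-- The discrepancy `d_H̃` over the class of threshold indicators of pairwise
differences of functions in `H`. -/
noncomputable def dHt {Z : Type*} [MeasurableSpace Z] (H : Set (Z → ℝ))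
    (μ ν : Measure Z) : ℝ :=
  sSup {x | ∃ g ∈ H, ∃ g' ∈ H, ∃ t ∈ Icc (0 : ℝ) 1,
    x = |(μ {z | t < |g z - g' z|}).toReal - (ν {z | t < |g z - g' z|}).toReal|}

section Aux

variable {Z : Type*} [MeasurableSpace Z]

lemma integrable_abs_sub (μ : Measure Z) [IsProbabilityMeasure μ]
    {g g' : Z → ℝ} (hg : Measurable g) (hg' : Measurable g')
    (hgb : ∀ z, g z ∈ Icc (0:ℝ) 1) (hgb' : ∀ z, g' z ∈ Icc (0:ℝ) 1) :
    Integrable (fun z => |g z - g' z|) μ := by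
  refine (integrable_const (1:ℝ)).mono' ((hg.sub hg').abs.aestronglyMeasurable)
    (ae_of_all _ fun z => ?_)
  have h1 := hgb z; have h2 := hgb' z
  simp only [Real.norm_eq_abs, abs_abs]
  rw [abs_sub_le_iff]
  constructor <;> [linarith [h1.1, h1.2, h2.1, h2.2]; linarith [h1.1, h1.2, h2.1, h2.2]]

lemma meas_set_empty (μ : Measure Z) {g g' : Z → ℝ}
    (hgb : ∀ z, g z ∈ Icc (0:ℝ) 1) (hgb' : ∀ z, g' z ∈ Icc (0:ℝ) 1)
    {t : ℝ} (ht : 1 ≤ t) : {z | t < |g z - g' z|} = ∅ := by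
  ext z
  simp only [mem_setOf_eq, mem_empty_iff_false, iff_false, not_lt]
  have h1 := hgb z; have h2 := hgb' z
  rw [abs_sub_le_iff] at *
  constructor <;> linarith [h1.1, h1.2, h2.1, h2.2]

lemma integrable_meas_toReal (μ : Measure Z) [IsProbabilityMeasure μ]
    {g g' : Z → ℝ}
    (hgb : ∀ z, g z ∈ Icc (0:ℝ) 1) (hgb' : ∀ z, g' z ∈ Icc (0:ℝ) 1) :
    Integrable (fun t : ℝ => (μ {z | t < |g z - g' z|}).toReal)
      (volume.restrict (Ioi (0:ℝ))) := by
  have hmeas : Measurable (fun t : ℝ => (μ {z | t < |g z - g' z|}).toReal) := by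
    refine Measurable.ennreal_toReal ?_
    exact Antitone.measurable (fun _ _ hst => measure_mono (fun _ h => lt_of_le_of_lt hst h))
  have hind : Integrable ((Ioc (0:ℝ) 1).indicator (fun _ => (1:ℝ)))
      (volume.restrict (Ioi (0:ℝ))) := by
    refine Integrable.restrict ?_
    refine (IntegrableOn.integrable_indicator ?_ measurableSet_Ioc)
    exact integrableOn_const (by simp [Real.volume_Ioc])
  refine Integrable.mono' hind hmeas.aestronglyMeasurable ?_
  filter_upwards [MeasureTheory.ae_restrict_mem measurableSet_Ioi] with t ht
  rcases le_or_gt t 1 with h1 | h1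
  · rw [indicator_of_mem (mem_Ioc.mpr ⟨ht, h1⟩)]
    simp only [Real.norm_eq_abs, abs_of_nonneg ENNReal.toReal_nonneg]
    exact ENNReal.toReal_le_of_le_ofReal zero_le_one (by simpa using prob_le_one)
  · rw [meas_set_empty μ hgb hgb' h1.le]
    simp only [measure_empty, ENNReal.toReal_zero, norm_zero]
    exact indicator_nonneg (fun _ _ => zero_le_one) t

lemma dHt_nonneg (H : Set (Z → ℝ)) (μ ν : Measure Z)
    [IsProbabilityMeasure μ] [IsProbabilityMeasure ν] (hHne : H.Nonempty) :
    0 ≤ dHt H μ ν := by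
  obtain ⟨g, hg⟩ := hHne
  have hbdd : BddAbove {x | ∃ g ∈ H, ∃ g' ∈ H, ∃ t ∈ Icc (0 : ℝ) 1,
      x = |(μ {z | t < |g z - g' z|}).toReal - (ν {z | t < |g z - g' z|}).toReal|} := by
    refine ⟨1, fun x hx => ?_⟩
    obtain ⟨a, -, b, -, t, -, rfl⟩ := hx
    have h1 : (μ {z | t < |a z - b z|}).toReal ≤ 1 :=
      ENNReal.toReal_le_of_le_ofReal zero_le_one (by simpa using prob_le_one)
    have h2 : (ν {z | t < |a z - b z|}).toReal ≤ 1 :=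
      ENNReal.toReal_le_of_le_ofReal zero_le_one (by simpa using prob_le_one)
    rw [abs_sub_le_iff]
    constructor <;> linarith [ENNReal.toReal_nonneg (a := μ {z | t < |a z - b z|}),
      ENNReal.toReal_nonneg (a := ν {z | t < |a z - b z|})]
  have h0 : (0:ℝ) ∈ {x | ∃ g ∈ H, ∃ g' ∈ H, ∃ t ∈ Icc (0 : ℝ) 1,
      x = |(μ {z | t < |g z - g' z|}).toReal - (ν {z | t < |g z - g' z|}).toReal|} := by
    refine ⟨g, hg, g, hg, 0, ⟨le_refl _, zero_le_one⟩, ?_⟩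
    have : {z | (0:ℝ) < |g z - g z|} = ∅ := by
      ext z; simp
    simp [this]
  exact le_csSup hbdd h0

lemma dHt_mem_le (H : Set (Z → ℝ)) (μ ν : Measure Z)
    [IsProbabilityMeasure μ] [IsProbabilityMeasure ν]
    {g g' : Z → ℝ} (hg : g ∈ H) (hg' : g' ∈ H) {t : ℝ} (ht : t ∈ Icc (0:ℝ) 1) :
    |(μ {z | t < |g z - g' z|}).toReal - (ν {z | t < |g z - g' z|}).toReal| ≤ dHt H μ ν := by
  have hbdd : BddAbove {x | ∃ g ∈ H, ∃ g' ∈ H, ∃ t ∈ Icc (0 : ℝ) 1,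
      x = |(μ {z | t < |g z - g' z|}).toReal - (ν {z | t < |g z - g' z|}).toReal|} := by
    refine ⟨1, fun x hx => ?_⟩
    obtain ⟨a, -, b, -, s, -, rfl⟩ := hx
    have h1 : (μ {z | s < |a z - b z|}).toReal ≤ 1 :=
      ENNReal.toReal_le_of_le_ofReal zero_le_one (by simpa using prob_le_one)
    have h2 : (ν {z | s < |a z - b z|}).toReal ≤ 1 :=
      ENNReal.toReal_le_of_le_ofReal zero_le_one (by simpa using prob_le_one)
    rw [abs_sub_le_iff]
    constructor <;> linarith [ENNReal.toReal_nonneg (a := μ {z | s < |a z - b z|}),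
      ENNReal.toReal_nonneg (a := ν {z | s < |a z - b z|})]
  exact le_csSup hbdd ⟨g, hg, g', hg', t, ht, rfl⟩

/-- Key lemma: the discrepancy of integrals of `|g - g'|` is bounded by `dHt`. -/
lemma abs_integral_sub_le (H : Set (Z → ℝ)) (μ ν : Measure Z)
    [IsProbabilityMeasure μ] [IsProbabilityMeasure ν]
    (hH : ∀ g ∈ H, Measurable g ∧ ∀ z, g z ∈ Icc (0 : ℝ) 1)
    {g g' : Z → ℝ} (hg : g ∈ H) (hg' : g' ∈ H) :
    |(∫ z, |g z - g' z| ∂μ) - ∫ z, |g z - g' z| ∂ν| ≤ dHt H μ ν := by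
  obtain ⟨hgm, hgb⟩ := hH g hg
  obtain ⟨hgm', hgb'⟩ := hH g' hg'
  have hintμ := integrable_abs_sub μ hgm hgm' hgb hgb'
  have hintν := integrable_abs_sub ν hgm hgm' hgb hgb'
  rw [hintμ.integral_eq_integral_meas_lt (ae_of_all _ fun z => abs_nonneg _),
      hintν.integral_eq_integral_meas_lt (ae_of_all _ fun z => abs_nonneg _)]
  have hIμ := integrable_meas_toReal μ hgb hgb'
  have hIν := integrable_meas_toReal ν hgb hgb'
  simp only [measureReal_def]
  rw [← integral_sub hIμ hIν]
  calc |∫ t in Ioi (0:ℝ), ((μ {z | t < |g z - g' z|}).toReal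
          - (ν {z | t < |g z - g' z|}).toReal)|
      ≤ ∫ t in Ioi (0:ℝ), |(μ {z | t < |g z - g' z|}).toReal
          - (ν {z | t < |g z - g' z|}).toReal| := by
        simpa [Real.norm_eq_abs] using norm_integral_le_integral_norm
          (μ := volume.restrict (Ioi (0:ℝ)))
          (fun t => (μ {z | t < |g z - g' z|}).toReal - (ν {z | t < |g z - g' z|}).toReal)
    _ ≤ ∫ t in Ioi (0:ℝ), (Ioc (0:ℝ) 1).indicator (fun _ => dHt H μ ν) t := by
        have hind : Integrable ((Ioc (0:ℝ) 1).indicator (fun _ => dHt H μ ν))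
            (volume.restrict (Ioi (0:ℝ))) := by
          refine Integrable.restrict ?_
          refine (IntegrableOn.integrable_indicator ?_ measurableSet_Ioc)
          exact integrableOn_const (by simp [Real.volume_Ioc])
        refine integral_mono_ae (hIμ.sub hIν).abs hind ?_
        filter_upwards [MeasureTheory.ae_restrict_mem measurableSet_Ioi] with t ht
        rcases le_or_gt t 1 with h1 | h1
        · rw [indicator_of_mem (mem_Ioc.mpr ⟨ht, h1⟩)]
          exact dHt_mem_le H μ ν hg hg' ⟨le_of_lt ht, h1⟩
        · rw [meas_set_empty μ hgb hgb' h1.le]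
          simp only [measure_empty, ENNReal.toReal_zero, sub_self, abs_zero]
          exact indicator_nonneg (fun _ _ => dHt_nonneg H μ ν ⟨g, hg⟩) t
    _ ≤ dHt H μ ν := by
        rw [integral_indicator measurableSet_Ioc,
          Measure.restrict_restrict measurableSet_Ioc]
        have : Ioc (0:ℝ) 1 ∩ Ioi 0 = Ioc 0 1 := inter_eq_left.mpr Ioc_subset_Ioi_self
        rw [this, setIntegral_const]
        simp [Real.volume_Ioc]

end Aux

/-- One-sided intermediate bounds in the proof of Lemma A.6 (regression):
`|ε_{μ_S}(h, f_S) − ε_{μ_T}(h, f_T)|` is bounded by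
`∫ |f_S − f_T| dμ_S + d_H̃(μ_S, μ_T)` and likewise with `μ_T`. -/
theorem stmt_17 {Z : Type*} [MeasurableSpace Z]
    (μS μT : Measure Z) [IsProbabilityMeasure μS] [IsProbabilityMeasure μT]
    (H : Set (Z → ℝ)) (hHne : H.Nonempty)
    (hH : ∀ g ∈ H, Measurable g ∧ ∀ z, g z ∈ Icc (0 : ℝ) 1)
    (fS fT : Z → ℝ) (hfS : fS ∈ H) (hfT : fT ∈ H)
    (h : Z → ℝ) (hh : h ∈ H) :
    |(∫ z, |h z - fS z| ∂μS) - ∫ z, |h z - fT z| ∂μT| ≤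
        (∫ z, |fS z - fT z| ∂μS) + dHt H μS μT ∧
    |(∫ z, |h z - fS z| ∂μS) - ∫ z, |h z - fT z| ∂μT| ≤
        (∫ z, |fS z - fT z| ∂μT) + dHt H μS μT := by
  obtain ⟨hhm, hhb⟩ := hH h hh
  obtain ⟨hSm, hSb⟩ := hH fS hfS
  obtain ⟨hTm, hTb⟩ := hH fT hfT
  -- integrabilities
  have ihS_S := integrable_abs_sub μS hhm hSm hhb hSb
  have ihT_S := integrable_abs_sub μS hhm hTm hhb hTb
  have ihS_T := integrable_abs_sub μT hhm hSm hhb hSb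
  have ihT_T := integrable_abs_sub μT hhm hTm hhb hTb
  have iST_S := integrable_abs_sub μS hSm hTm hSb hTb
  have iST_T := integrable_abs_sub μT hSm hTm hSb hTb
  -- pointwise bound : ||h-fS| - |h-fT|| ≤ |fS - fT|
  have hpt : ∀ z, abs (|h z - fS z| - |h z - fT z|) ≤ |fS z - fT z| := by
    intro z
    rw [abs_sub_le_iff]
    constructor
    · calc |h z - fS z| - |h z - fT z| ≤ |(h z - fS z) - (h z - fT z)| :=
            abs_sub_abs_le_abs_sub _ _
        _ = |fS z - fT z| := by rw [abs_sub_comm]; ring_nf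
    · calc |h z - fT z| - |h z - fS z| ≤ |(h z - fT z) - (h z - fS z)| :=
            abs_sub_abs_le_abs_sub _ _
        _ = |fS z - fT z| := by ring_nf
  -- swap bounds on a single measure
  have hswap : ∀ (μ : Measure Z) (_ : IsProbabilityMeasure μ),
      Integrable (fun z => |h z - fS z|) μ → Integrable (fun z => |h z - fT z|) μ →
      |(∫ z, |h z - fS z| ∂μ) - ∫ z, |h z - fT z| ∂μ| ≤ ∫ z, |fS z - fT z| ∂μ := by
    intro μ _ i1 i2
    rw [← integral_sub i1 i2]
    calc |∫ z, (|h z - fS z| - |h z - fT z|) ∂μ|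
        ≤ ∫ z, abs (|h z - fS z| - |h z - fT z|) ∂μ := by
          simpa [Real.norm_eq_abs] using norm_integral_le_integral_norm (μ := μ)
            (fun z => |h z - fS z| - |h z - fT z|)
      _ ≤ ∫ z, |fS z - fT z| ∂μ := by
          refine integral_mono (i1.sub i2).abs ?_ (fun z => hpt z)
          exact integrable_abs_sub μ hSm hTm hSb hTb
  have key_hT := abs_integral_sub_le H μS μT hH hh hfT
  have key_hS := abs_integral_sub_le H μS μT hH hh hfS
  constructor
  · calc |(∫ z, |h z - fS z| ∂μS) - ∫ z, |h z - fT z| ∂μT|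
        ≤ |(∫ z, |h z - fS z| ∂μS) - ∫ z, |h z - fT z| ∂μS| +
          |(∫ z, |h z - fT z| ∂μS) - ∫ z, |h z - fT z| ∂μT| := by
          have := abs_sub_le (∫ z, |h z - fS z| ∂μS) (∫ z, |h z - fT z| ∂μS)
            (∫ z, |h z - fT z| ∂μT)
          linarith
      _ ≤ (∫ z, |fS z - fT z| ∂μS) + dHt H μS μT := by
          have h1 := hswap μS inferInstance ihS_S ihT_S
          linarith [key_hT]
  · calc |(∫ z, |h z - fS z| ∂μS) - ∫ z, |h z - fT z| ∂μT|
        ≤ |(∫ z, |h z - fS z| ∂μS) - ∫ z, |h z - fS z| ∂μT| +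
          |(∫ z, |h z - fS z| ∂μT) - ∫ z, |h z - fT z| ∂μT| := by
          have := abs_sub_le (∫ z, |h z - fS z| ∂μS) (∫ z, |h z - fS z| ∂μT)
            (∫ z, |h z - fT z| ∂μT)
          linarith
      _ ≤ (∫ z, |fS z - fT z| ∂μT) + dHt H μS μT := by
          have h1 := hswap μT inferInstance ihS_T ihT_T
          linarith [key_hS]
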